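/- Let A be a graded ring and B a set of homogeneous two-sided ideals of A, each of which is finitely generated as a right ideal. Let F be the set of all homogeneous right ideals of A that contain a finite product I_1·I_2·⋯·I_k of ideals from B (the empty product being A itself). Then F is a t-filter, and F is of finite type: every member of F contains a finitely generated homogeneous right ideal that again belongs to F. (Proposition 2.3(2).) -/

import Mathlib

/-!
Every ideal of `B` is two-sided, homogeneous and generated as a right ideal by finitely many
homogeneous elements, so every finite product `P` of members of `B` is a two-sided ideal
generated as a right ideal by finitely many homogeneous elements (products of generators of the
factors). Two-sidedness gives `a P ⊆ P`, hence (T2), and makes the products downward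
directed. For (T3), if `P ⊆ 𝔞` is generated by homogeneous `g₁, …, gᵣ` and each `(𝔟 : gᵢ)`
contains a product, then a single product `P'` lies in all of them, and `P P' ⊆ 𝔟`.
Finally `P` itself is a finitely generated homogeneous member of `F`.
-/

/-- `I ⊆ A` is a right ideal (as a set). -/
def IsRightIdealSet {A : Type*} [Ring A] (I : Set A) : Prop :=
  (0 : A) ∈ I ∧ (∀ x ∈ I, ∀ y ∈ I, x + y ∈ I) ∧ (∀ x ∈ I, -x ∈ I) ∧
    ∀ x ∈ I, ∀ a : A, x * a ∈ I

/-- `I ⊆ A` is a two-sided ideal (as a set). -/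
def IsTwoSidedIdealSet {A : Type*} [Ring A] (I : Set A) : Prop :=
  IsRightIdealSet I ∧ ∀ x ∈ I, ∀ a : A, a * x ∈ I

/-- A subset of a graded ring is homogeneous if it contains all homogeneous
components of each of its elements. -/
def SetIsHomogeneous {A : Type*} [Ring A] (𝒜 : ℕ → AddSubgroup A) [GradedRing 𝒜]
    (I : Set A) : Prop :=
  ∀ x ∈ I, ∀ n : ℕ, ((DirectSum.decompose 𝒜 x n : 𝒜 n) : A) ∈ I

/-- `a` is a homogeneous element of the graded ring `A`. -/
def IsHomogeneousElem {A : Type*} [Ring A] (𝒜 : ℕ → AddSubgroup A) [GradedRing 𝒜]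
    (a : A) : Prop :=
  ∃ n : ℕ, a ∈ 𝒜 n

/-- A t-filter on a graded ring `A`. -/
structure IsTFilter {A : Type*} [Ring A] (𝒜 : ℕ → AddSubgroup A) [GradedRing 𝒜]
    (F : Set (Set A)) : Prop where
  mem_ideal : ∀ I ∈ F, IsRightIdealSet I ∧ SetIsHomogeneous 𝒜 I
  univ_mem : (Set.univ : Set A) ∈ F
  colon_mem : ∀ I ∈ F, ∀ a : A, IsHomogeneousElem 𝒜 a → {x : A | a * x ∈ I} ∈ F
  saturated : ∀ I ∈ F, ∀ J : Set A, IsRightIdealSet J → SetIsHomogeneous 𝒜 J →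
    (∀ a ∈ I, IsHomogeneousElem 𝒜 a → {x : A | a * x ∈ J} ∈ F) → J ∈ F

/-- The product `I·J` of two subsets of `A`: the additive span of the products
`x * y` with `x ∈ I`, `y ∈ J`. -/
def setIdealMul {A : Type*} [Ring A] (I J : Set A) : Set A :=
  (AddSubgroup.closure {z : A | ∃ x ∈ I, ∃ y ∈ J, z = x * y} : AddSubgroup A)

/-- The product of a finite list of ideals; the empty product is `A` itself. -/
def listIdealProd {A : Type*} [Ring A] : List (Set A) → Set A
  | [] => Set.univ
  | I :: l => setIdealMul I (listIdealProd l)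

/-- The right ideal of `A` generated by a set `s`. -/
def rightIdealSpan {A : Type*} [Ring A] (s : Set A) : Set A :=
  (AddSubgroup.closure {y : A | ∃ a ∈ s, ∃ r : A, y = a * r} : AddSubgroup A)

/-- `I` is finitely generated as a right ideal. -/
def IsFGRightIdealSet {A : Type*} [Ring A] (I : Set A) : Prop :=
  ∃ s : Finset A, I = rightIdealSpan (s : Set A)

theorem AddMonoidHom.apply_mem_of_mem_closure {G H : Type*} [AddGroup G] [AddGroup H]
    {S : Set G} {K : AddSubgroup H} (f : G →+ H) (hf : Set.MapsTo f S K) {x : G}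
    (hx : x ∈ AddSubgroup.closure S) : f x ∈ K :=
  (AddSubgroup.closure_le (K.comap f)).2 hf hx

open scoped Pointwise

section Ring

variable {A : Type*} [Ring A]

def IsRightIdealSet.toAddSubgroup {J : Set A} (hJ : IsRightIdealSet J) : AddSubgroup A where
  carrier := J
  zero_mem' := hJ.1
  add_mem' := fun hx hy => hJ.2.1 _ hx _ hy
  neg_mem' := hJ.2.2.1 _

theorem isRightIdealSet_univ : IsRightIdealSet (Set.univ : Set A) :=
  ⟨trivial, fun _ _ _ _ => trivial, fun _ _ => trivial, fun _ _ _ => trivial⟩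

theorem isRightIdealSet_closure {S : Set A} (hS : ∀ x ∈ S, ∀ a : A, x * a ∈ S) :
    IsRightIdealSet (AddSubgroup.closure S : Set A) :=
  ⟨zero_mem _, fun _ hx _ hy => add_mem hx hy, fun _ hx => neg_mem hx, fun _ hx a =>
    (AddMonoidHom.mulRight a).apply_mem_of_mem_closure
      (fun y hy => AddSubgroup.subset_closure (hS y hy a)) hx⟩

theorem IsRightIdealSet.colon {J : Set A} (hJ : IsRightIdealSet J) (a : A) :
    IsRightIdealSet {x : A | a * x ∈ J} := by
  refine ⟨?_, fun x hx y hy => ?_, fun x hx => ?_, fun x hx r => ?_⟩ <;>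
    simp only [Set.mem_ofPred_eq, mul_zero, mul_add, mul_neg, ← mul_assoc] at *
  exacts [hJ.1, hJ.2.1 _ hx _ hy, hJ.2.2.1 _ hx, hJ.2.2.2 _ hx r]

theorem subset_rightIdealSpan (s : Set A) : s ⊆ rightIdealSpan s := fun a ha =>
  AddSubgroup.subset_closure ⟨a, ha, 1, (mul_one a).symm⟩

theorem isRightIdealSet_rightIdealSpan (s : Set A) : IsRightIdealSet (rightIdealSpan s) :=
  isRightIdealSet_closure <| by
    rintro _ ⟨b, hb, r, rfl⟩ a
    exact ⟨b, hb, r * a, mul_assoc b r a⟩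

theorem rightIdealSpan_subset {s J : Set A} (hJ : IsRightIdealSet J) (hs : s ⊆ J) :
    rightIdealSpan s ⊆ J := by
  refine (AddSubgroup.closure_le hJ.toAddSubgroup).2 ?_
  rintro _ ⟨b, hb, r, rfl⟩
  exact hJ.2.2.2 b (hs hb) r

theorem mul_mem_setIdealMul {I P : Set A} {x y : A} (hx : x ∈ I) (hy : y ∈ P) :
    x * y ∈ setIdealMul I P :=
  AddSubgroup.subset_closure ⟨x, hx, y, hy, rfl⟩

theorem setIdealMul_subset {I P J : Set A} (hJ : IsRightIdealSet J)
    (h : ∀ x ∈ I, ∀ y ∈ P, x * y ∈ J) : setIdealMul I P ⊆ J := by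
  refine (AddSubgroup.closure_le hJ.toAddSubgroup).2 ?_
  rintro _ ⟨x, hx, y, hy, rfl⟩
  exact h x hx y hy

theorem isRightIdealSet_setIdealMul (I : Set A) {P : Set A} (hP : IsRightIdealSet P) :
    IsRightIdealSet (setIdealMul I P) :=
  isRightIdealSet_closure <| by
    rintro _ ⟨x, hx, y, hy, rfl⟩ a
    exact ⟨x, hx, y * a, hP.2.2.2 y hy a, mul_assoc x y a⟩

theorem mul_mem_setIdealMul_of_left {I P : Set A} (hI : ∀ x ∈ I, ∀ a : A, a * x ∈ I) (a : A)
    {z : A} (hz : z ∈ setIdealMul I P) : a * z ∈ setIdealMul I P := by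
  refine (AddMonoidHom.mulLeft a).apply_mem_of_mem_closure ?_ hz
  rintro _ ⟨x, hx, y, hy, rfl⟩
  rw [AddMonoidHom.coe_mulLeft, ← mul_assoc]
  exact mul_mem_setIdealMul (hI x hx a) hy

theorem isRightIdealSet_listIdealProd : ∀ l : List (Set A), IsRightIdealSet (listIdealProd l)
  | [] => isRightIdealSet_univ
  | I :: l => isRightIdealSet_setIdealMul I (isRightIdealSet_listIdealProd l)

theorem mul_mem_listIdealProd {l : List (Set A)}
    (hl : ∀ I ∈ l, ∀ x ∈ I, ∀ a : A, a * x ∈ I) (a : A) {z : A} (hz : z ∈ listIdealProd l) :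
    a * z ∈ listIdealProd l := by
  cases l with
  | nil => trivial
  | cons I l => exact mul_mem_setIdealMul_of_left (hl I List.mem_cons_self) a hz

theorem listIdealProd_append_subset {l m : List (Set A)} {J : Set A} (hJ : IsRightIdealSet J)
    (h : ∀ x ∈ listIdealProd l, ∀ y ∈ listIdealProd m, x * y ∈ J) :
    listIdealProd (l ++ m) ⊆ J := by
  induction l generalizing J with
  | nil => exact fun y hy => one_mul y ▸ h 1 trivial y hy
  | cons I l ih =>
    exact setIdealMul_subset hJ fun x hx y hy => ih (hJ.colon x)
      (fun x' hx' y' hy' => by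
        simpa only [Set.mem_ofPred_eq, ← mul_assoc] using
          h _ (mul_mem_setIdealMul hx hx') y' hy') hy

theorem mul_mem_of_mem_rightIdealSpan {s T J : Set A} (hJ : IsRightIdealSet J)
    (hT : ∀ y ∈ T, ∀ a : A, a * y ∈ T) (h : ∀ g ∈ s, ∀ y ∈ T, g * y ∈ J)
    {x y : A} (hx : x ∈ rightIdealSpan s) (hy : y ∈ T) : x * y ∈ J := by
  refine (AddMonoidHom.mulRight y).apply_mem_of_mem_closure (K := hJ.toAddSubgroup) ?_ hx
  rintro _ ⟨g, hg, r, rfl⟩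
  show g * r * y ∈ J
  rw [mul_assoc]
  exact h g hg _ (hT y hy r)

theorem setIdealMul_rightIdealSpan (s t : Set A)
    (ht : ∀ y ∈ rightIdealSpan t, ∀ a : A, a * y ∈ rightIdealSpan t) :
    setIdealMul (rightIdealSpan s) (rightIdealSpan t) = rightIdealSpan (s * t) := by
  refine subset_antisymm (setIdealMul_subset (isRightIdealSet_rightIdealSpan _)
    fun x hx y hy => mul_mem_of_mem_rightIdealSpan (isRightIdealSet_rightIdealSpan _) ht
      (fun g hg y hy => ?_) hx hy) ?_
  · exact rightIdealSpan_subset ((isRightIdealSet_rightIdealSpan _).colon g)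
      (fun b hb => subset_rightIdealSpan _ (Set.mul_mem_mul hg hb)) hy
  · refine rightIdealSpan_subset
      (isRightIdealSet_setIdealMul _ (isRightIdealSet_rightIdealSpan t)) ?_
    rintro _ ⟨g, hg, b, hb, rfl⟩
    exact mul_mem_setIdealMul (subset_rightIdealSpan s hg) (subset_rightIdealSpan t hb)

/-- Since the members of `B` are left ideals, `P(l ++ m) ⊆ P(l) ∩ P(m)`, so the sets containing
a product `P(l)` of members of `B` form a filter. -/
def productFilter (B : Set (Set A)) (hB : ∀ I ∈ B, ∀ x ∈ I, ∀ a : A, a * x ∈ I) :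
    Filter A where
  sets := {J | ∃ l : List (Set A), (∀ I ∈ l, I ∈ B) ∧ listIdealProd l ⊆ J}
  univ_sets := ⟨[], by simp⟩
  sets_of_superset := fun ⟨l, hl, hJ⟩ hJK => ⟨l, hl, hJ.trans hJK⟩
  inter_sets := by
    rintro J K ⟨l, hl, hJ⟩ ⟨m, hm, hK⟩
    have hm' : ∀ I ∈ m, ∀ x ∈ I, ∀ a : A, a * x ∈ I := fun I hI => hB I (hm I hI)
    refine ⟨l ++ m, fun I hI => (List.mem_append.1 hI).elim (hl I) (hm I),
      Set.subset_inter ?_ ?_⟩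
    · exact (listIdealProd_append_subset (isRightIdealSet_listIdealProd l)
        fun x _ y _ => (isRightIdealSet_listIdealProd l).2.2.2 x ‹_› y).trans hJ
    · exact (listIdealProd_append_subset (isRightIdealSet_listIdealProd m)
        fun x _ y hy => mul_mem_listIdealProd hm' x hy).trans hK

end Ring

section Graded

variable {A : Type*} [Ring A] (𝒜 : ℕ → AddSubgroup A) [GradedRing 𝒜]

theorem IsHomogeneousElem.mul {a b : A} (ha : IsHomogeneousElem 𝒜 a)
    (hb : IsHomogeneousElem 𝒜 b) : IsHomogeneousElem 𝒜 (a * b) :=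
  let ⟨m, hm⟩ := ha
  let ⟨n, hn⟩ := hb
  ⟨m + n, SetLike.mul_mem_graded hm hn⟩

theorem SetIsHomogeneous.colon {J : Set A} (hJ : SetIsHomogeneous 𝒜 J) {a : A}
    (ha : IsHomogeneousElem 𝒜 a) : SetIsHomogeneous 𝒜 {x : A | a * x ∈ J} := by
  obtain ⟨m, hm⟩ := ha
  intro x hx n
  have := hJ (a * x) hx (m + n)
  rwa [DirectSum.coe_decompose_mul_add_of_left_mem 𝒜 hm] at this

theorem setIsHomogeneous_rightIdealSpan {s : Set A} (hs : ∀ a ∈ s, IsHomogeneousElem 𝒜 a) :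
    SetIsHomogeneous 𝒜 (rightIdealSpan s) := by
  intro x hx n
  refine (GradedRing.proj 𝒜 n).apply_mem_of_mem_closure (K := AddSubgroup.closure _) ?_ hx
  rintro _ ⟨a, ha, r, rfl⟩
  obtain ⟨m, hm⟩ := hs a ha
  show ((DirectSum.decompose 𝒜 (a * r) n : 𝒜 n) : A) ∈ rightIdealSpan s
  by_cases h : m ≤ n
  · rw [DirectSum.coe_decompose_mul_of_left_mem_of_le 𝒜 hm h]
    exact AddSubgroup.subset_closure ⟨a, ha, _, rfl⟩
  · rw [DirectSum.coe_decompose_mul_of_left_mem_of_not_le 𝒜 hm h]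
    exact zero_mem _

/-- The homogeneous components of finitely many generators again generate. -/
theorem SetIsHomogeneous.exists_homogeneous_generators {I : Set A}
    (hI : SetIsHomogeneous 𝒜 I) (hfg : IsFGRightIdealSet I) :
    ∃ s : Finset A, (∀ a ∈ s, IsHomogeneousElem 𝒜 a) ∧ I = rightIdealSpan s := by
  classical
  obtain ⟨s₀, rfl⟩ := hfg
  set s := s₀.biUnion fun a =>
    (DirectSum.decompose 𝒜 a).support.image fun n => (DirectSum.decompose 𝒜 a n : A)
  have hs : ∀ b ∈ s, IsHomogeneousElem 𝒜 b ∧ b ∈ rightIdealSpan s₀ := by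
    simp only [s, Finset.mem_biUnion, Finset.mem_image]
    rintro _ ⟨a, ha, n, -, rfl⟩
    exact ⟨⟨n, (DirectSum.decompose 𝒜 a n).2⟩, hI a (subset_rightIdealSpan _ ha) n⟩
  refine ⟨s, fun b hb => (hs b hb).1, subset_antisymm ?_
    (rightIdealSpan_subset (isRightIdealSet_rightIdealSpan _) fun b hb => (hs b hb).2)⟩
  refine rightIdealSpan_subset (isRightIdealSet_rightIdealSpan _) fun a ha => ?_
  rw [← DirectSum.sum_support_decompose 𝒜 a]
  exact AddSubgroup.sum_mem _ fun n hn => subset_rightIdealSpan _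
    (Finset.mem_biUnion.2 ⟨a, ha, Finset.mem_image_of_mem _ hn⟩)

theorem exists_homogeneous_listIdealProd_eq_rightIdealSpan {B : Set (Set A)}
    (hB : ∀ I ∈ B, IsTwoSidedIdealSet I ∧ SetIsHomogeneous 𝒜 I ∧ IsFGRightIdealSet I) :
    ∀ l : List (Set A), (∀ I ∈ l, I ∈ B) →
      ∃ S : Finset A, (∀ g ∈ S, IsHomogeneousElem 𝒜 g) ∧
        listIdealProd l = rightIdealSpan S
  | [], _ => by
    refine ⟨{1}, by simpa using ⟨0, SetLike.one_mem_graded 𝒜⟩,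
      (Set.eq_univ_of_forall ?_).symm⟩
    exact fun x => one_mul x ▸
      (isRightIdealSet_rightIdealSpan _).2.2.2 1 (subset_rightIdealSpan _ (by simp)) x
  | I :: l, hl => by
    classical
    obtain ⟨-, hIh, hIfg⟩ := hB I (hl I List.mem_cons_self)
    obtain ⟨s, hs, rfl⟩ := hIh.exists_homogeneous_generators 𝒜 hIfg
    have hlB : ∀ J ∈ l, J ∈ B := fun J hJ => hl J (List.mem_cons_of_mem _ hJ)
    obtain ⟨T, hT, hPT⟩ := exists_homogeneous_listIdealProd_eq_rightIdealSpan hB l hlB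
    refine ⟨s * T, ?_, ?_⟩
    · simp only [Finset.mem_mul]
      rintro _ ⟨a, ha, b, hb, rfl⟩
      exact (hs a ha).mul 𝒜 (hT b hb)
    · have hleft : ∀ y ∈ rightIdealSpan T, ∀ a : A, a * y ∈ rightIdealSpan T :=
        hPT ▸ fun y hy a => mul_mem_listIdealProd (fun J hJ => (hB J (hlB J hJ)).1.2) a hy
      rw [Finset.coe_mul, ← setIdealMul_rightIdealSpan _ _ hleft, ← hPT]
      rfl

end Graded

/-- Proposition 2.3(2). -/
theorem tFilter_of_products {A : Type*} [Ring A] (𝒜 : ℕ → AddSubgroup A)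
    [GradedRing 𝒜] (B : Set (Set A))
    (hB : ∀ I ∈ B, IsTwoSidedIdealSet I ∧ SetIsHomogeneous 𝒜 I ∧ IsFGRightIdealSet I) :
    IsTFilter 𝒜 {J : Set A | IsRightIdealSet J ∧ SetIsHomogeneous 𝒜 J ∧
        ∃ l : List (Set A), (∀ I ∈ l, I ∈ B) ∧ listIdealProd l ⊆ J} ∧
      ∀ J ∈ {J : Set A | IsRightIdealSet J ∧ SetIsHomogeneous 𝒜 J ∧
        ∃ l : List (Set A), (∀ I ∈ l, I ∈ B) ∧ listIdealProd l ⊆ J},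
        ∃ J' ∈ {J : Set A | IsRightIdealSet J ∧ SetIsHomogeneous 𝒜 J ∧
          ∃ l : List (Set A), (∀ I ∈ l, I ∈ B) ∧ listIdealProd l ⊆ J},
          J' ⊆ J ∧ IsFGRightIdealSet J' := by
  have hleft : ∀ I ∈ B, ∀ x ∈ I, ∀ a : A, a * x ∈ I := fun I hI => (hB I hI).1.2
  have hleft_of {l : List (Set A)} (hl : ∀ I ∈ l, I ∈ B) :
      ∀ I ∈ l, ∀ x ∈ I, ∀ a : A, a * x ∈ I := fun I hI => hleft I (hl I hI)
  have hgen := exists_homogeneous_listIdealProd_eq_rightIdealSpan 𝒜 hB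
  refine ⟨⟨fun I hI => ⟨hI.1, hI.2.1⟩, ⟨isRightIdealSet_univ, fun _ _ _ => trivial,
    (productFilter B hleft).univ_mem⟩, ?_, ?_⟩, ?_⟩
  · rintro I ⟨hI, hIh, l, hl, hPI⟩ a ha
    exact ⟨hI.colon a, hIh.colon 𝒜 ha, l, hl,
      fun x hx => hPI (mul_mem_listIdealProd (hleft_of hl) a hx)⟩
  · rintro I ⟨-, -, l, hl, hPI⟩ J hJ hJh hcolon
    obtain ⟨S, hS, hPS⟩ := hgen l hl
    have hSI : ∀ g ∈ S, g ∈ I := fun g hg => hPI (hPS ▸ subset_rightIdealSpan _ hg)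
    obtain ⟨M, hM, hPM⟩ : ⋂ g ∈ S, {x : A | g * x ∈ J} ∈ productFilter B hleft :=
      (Filter.biInter_finset_mem S).2 fun g hg => (hcolon g (hSI g hg) (hS g hg)).2.2
    refine ⟨hJ, hJh, l ++ M, fun I hI => (List.mem_append.1 hI).elim (hl I) (hM I),
      listIdealProd_append_subset hJ fun x hx y hy => ?_⟩
    rw [hPS] at hx
    exact mul_mem_of_mem_rightIdealSpan hJ
      (fun y hy a => mul_mem_listIdealProd (hleft_of hM) a hy)
      (fun g hg y hy => Set.mem_iInter₂.1 (hPM hy) g hg) hx hy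
  · rintro J ⟨-, -, l, hl, hPJ⟩
    obtain ⟨S, hS, hPS⟩ := hgen l hl
    exact ⟨listIdealProd l, ⟨isRightIdealSet_listIdealProd l,
      hPS ▸ setIsHomogeneous_rightIdealSpan 𝒜 hS, l, hl, subset_rfl⟩, hPJ, S, hPS⟩
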